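/- arXiv:2501.03099 — 4 statements merged into one kernel-verified Lean document; each statement's English description precedes it below -/
import Mathlib

section
/- For every integer c ≥ 6, the unique solution of the recursion Z(c) = Z(c−1) + 2·Z(c−2) + 2·j(c−6) + 2·(−1)^c·[3 ∣ c] with initial conditions Z(6)=2 and Z(7)=4 is Z(c) = ((3c−8)/27)·2^{c−4} + (14/27)·(−1)^c − (2/3)·(−1)^c·[c ≡ 1 mod 3], where [P] denotes 1 if P holds and 0 otherwise. -/
def jac (c : ℕ) : ℤ := (2 ^ c - (-1 : ℤ) ^ c) / 3

theorem jac_cast (n : ℕ) : (jac n : ℚ) = (2 ^ n - (-1) ^ n) / 3 := by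
  have h3 : (3 : ℤ) ∣ 2 ^ n - (-1) ^ n := by
    simpa using sub_dvd_pow_sub_pow (2 : ℤ) (-1) n
  rw [jac, Int.cast_div h3 (by norm_num)]
  push_cast
  rfl

theorem eq_of_second_order_recurrence {α : Type*} (f : α → α → ℕ → α) {u v : ℕ → α}
    (hu : ∀ n, u (n + 2) = f (u (n + 1)) (u n) n) (hv : ∀ n, v (n + 2) = f (v (n + 1)) (v n) n)
    (h0 : u 0 = v 0) (h1 : u 1 = v 1) : u = v := by
  have pair : ∀ n, u n = v n ∧ u (n + 1) = v (n + 1) := by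
    intro n
    induction n with
    | zero => exact ⟨h0, h1⟩
    | succ n ih => exact ⟨ih.2, by rw [hu, hv, ih.1, ih.2]⟩
  exact funext fun n => (pair n).1

theorem indicator_mod_three_one (n : ℕ) :
    ((if (n + 2) % 3 = 1 then 1 else 0) + (if (n + 1) % 3 = 1 then 1 else 0)
      - 2 * (if n % 3 = 1 then 1 else 0) : ℚ) = 1 - 3 * (if 3 ∣ n + 2 then 1 else 0) := by
  rcases (show n % 3 = 0 ∨ n % 3 = 1 ∨ n % 3 = 2 by omega) with h | h | h <;>
    norm_num [Nat.dvd_iff_mod_eq_zero, Nat.add_mod, h]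

def closedForm (c : ℕ) : ℚ :=
  ((3 * (c : ℚ) - 8) / 27) * 2 ^ (c - 4) + (14 / 27) * (-1 : ℚ) ^ c
    - (2 / 3) * (-1 : ℚ) ^ c * (if c % 3 = 1 then 1 else 0)

/-- The exponential part of `closedForm` accounts for `2 * jac (c - 6)` up to `-(2/3)(-1)^c`;
the correction term, periodic mod 3, accounts for the rest via `indicator_mod_three_one`. -/
theorem closedForm_add_eight (n : ℕ) :
    closedForm (n + 8) = closedForm (n + 7) + 2 * closedForm (n + 6)
      + 2 * ((2 ^ (n + 2) - (-1) ^ (n + 2)) / 3) + 2 * (-1) ^ (n + 8)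
        * (if 3 ∣ n + 8 then 1 else 0) := by
  have hind := indicator_mod_three_one (n + 6)
  simp only [closedForm, show n + 8 - 4 = n + 4 by omega, show n + 7 - 4 = n + 3 by omega,
    show n + 6 - 4 = n + 2 by omega, show n + 6 + 2 = n + 8 by omega,
    show n + 6 + 1 = n + 7 by omega] at hind ⊢
  push_cast
  linear_combination (-(2 / 3) * (-1 : ℚ) ^ (n + 8)) * hind

theorem Z_closed_form (Z : ℕ → ℚ)
    (h6 : Z 6 = 2) (h7 : Z 7 = 4)
    (hrec : ∀ c : ℕ, 8 ≤ c →
      Z c = Z (c - 1) + 2 * Z (c - 2) + 2 * (jac (c - 6) : ℚ)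
        + 2 * (-1 : ℚ) ^ c * (if 3 ∣ c then 1 else 0)) :
    ∀ c : ℕ, 6 ≤ c →
      Z c = ((3 * (c : ℚ) - 8) / 27) * 2 ^ (c - 4) + (14 / 27) * (-1 : ℚ) ^ c
        - (2 / 3) * (-1 : ℚ) ^ c * (if c % 3 = 1 then 1 else 0) := by
  let step : ℚ → ℚ → ℕ → ℚ := fun x y n =>
    x + 2 * y + 2 * ((2 ^ (n + 2) - (-1) ^ (n + 2)) / 3) + 2 * (-1) ^ (n + 8)
      * (if 3 ∣ n + 8 then 1 else 0)
  have hshift : (fun n => Z (n + 6)) = fun n => closedForm (n + 6) := by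
    refine eq_of_second_order_recurrence step (fun n => ?_) (fun n => closedForm_add_eight n) ?_ ?_
    · simpa [step, jac_cast] using hrec (n + 8) (by omega)
    · norm_num [closedForm, h6]
    · norm_num [closedForm, h7]
  intro c hc
  obtain ⟨n, rfl⟩ : ∃ n, c = n + 6 := ⟨c - 6, by omega⟩
  exact congrFun hshift n
end

section
/- Let F(c) = |E(c)| where E(c) is the set of tuples (e_1,…,e_k) of even integers with each |e_i| ≥ 4 and c = Σ|e_i| − #{i < k : sign(e_i) = sign(e_{i+1})}. Then F satisfies F(c) = F(c−2) + F(c−3) + F(c−4) for all c ≥ 8, with F(4)=2, F(5)=0, F(6)=2, F(7)=2. -/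
/-- `Eset c` is the set of nonempty tuples of even integers `e_i` with `|e_i| ≥ 4`
and `c = Σ|e_i| − #{i : sign e_i = sign e_{i+1}}`. -/
def Eset (c : ℕ) : Set (List ℤ) :=
  {l | l ≠ [] ∧ (∀ e ∈ l, Even e ∧ 4 ≤ |e|) ∧
    (c : ℤ) = (l.map (fun e => |e|)).sum
      - ((l.zip l.tail).filter (fun p => p.1.sign == p.2.sign)).length}

noncomputable def Fcard (c : ℕ) : ℕ := Nat.card (Eset c)

/-!
Sort `l ∈ E(c)` by its first entry `e`. If `|e| ≥ 6`, moving `e` by `2` towards `0` gives an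
element of `E(c - 2)`. If `|e| = 4`, then `l` has a second entry `f` (otherwise `c = 4`), and
dropping `e` gives an element of `E(c - 3)` when `e` and `f` have the same sign and of `E(c - 4)`
otherwise. Read backwards, these are three injective maps with disjoint images covering `E(c)`,
so `F(c) = F(c - 2) + F(c - 3) + F(c - 4)` already for `c ≥ 5`. The initial values follow from
`E(c) = ∅` for `c < 4` and `E(4) = {(4), (-4)}`.
-/

theorem List.modifyHead_injective {α : Type*} {f : α → α} (hf : f.Injective) :
    (List.modifyHead f).Injective := by
  rintro (_ | ⟨a, s⟩) (_ | ⟨b, t⟩) h <;> simp_all [hf.eq_iff]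

namespace Int

theorem sign_eq_one_or_neg_one {e : ℤ} (he : e ≠ 0) : e.sign = 1 ∨ e.sign = -1 := by
  rcases he.lt_or_gt with h | h
  · exact .inr (sign_eq_neg_one_of_neg h)
  · exact .inl (sign_eq_one_of_pos h)

theorem sign_eq_neg_of_sign_ne {e f : ℤ} (he : e ≠ 0) (hf : f ≠ 0) (h : e.sign ≠ f.sign) :
    e.sign = -f.sign := by
  rcases sign_eq_one_or_neg_one he with he' | he' <;>
    rcases sign_eq_one_or_neg_one hf with hf' | hf' <;> rw [he', hf'] at h ⊢ <;> omega

theorem sign_add_two_mul_sign (e : ℤ) : (e + 2 * e.sign).sign = e.sign := by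
  rcases lt_trichotomy e 0 with h | rfl | h
  · rw [sign_eq_neg_one_of_neg h, sign_eq_neg_one_of_neg (by omega)]
  · rfl
  · rw [sign_eq_one_of_pos h, sign_eq_one_of_pos (by omega)]

theorem abs_add_two_mul_sign {e : ℤ} (he : e ≠ 0) : |e + 2 * e.sign| = |e| + 2 := by
  rcases he.lt_or_gt with h | h
  · rw [sign_eq_neg_one_of_neg h, abs_of_neg h, abs_of_neg (by omega)]; ring
  · rw [sign_eq_one_of_pos h, abs_of_pos h, abs_of_pos (by omega)]; ring

theorem add_two_mul_sign_injective : Function.Injective fun e : ℤ => e + 2 * e.sign := by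
  intro a b h
  have hsign : a.sign = b.sign := by
    simpa only [sign_add_two_mul_sign] using congrArg Int.sign h
  simp only [hsign] at h
  omega

theorem sign_sub_two_mul_sign {e : ℤ} (he : 3 ≤ |e|) : (e - 2 * e.sign).sign = e.sign := by
  rcases abs_cases e with ⟨h, -⟩ | ⟨h, -⟩
  · rw [sign_eq_one_of_pos (a := e) (by omega)]; exact sign_eq_one_of_pos (by omega)
  · rw [sign_eq_neg_one_of_neg (a := e) (by omega)]; exact sign_eq_neg_one_of_neg (by omega)

end Int

def cost (l : List ℤ) : ℤ :=
  (l.map (fun e => |e|)).sum - ((l.zip l.tail).filter (fun p => p.1.sign == p.2.sign)).length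

theorem cost_singleton (e : ℤ) : cost [e] = |e| := by simp [cost]

theorem cost_cons_cons (e f : ℤ) (t : List ℤ) :
    cost (e :: f :: t) = |e| + cost (f :: t) - if e.sign = f.sign then 1 else 0 := by
  simp only [cost, List.tail_cons, List.zip_cons_cons, List.filter_cons, List.map_cons,
    List.sum_cons]
  split_ifs <;> simp_all <;> ring

theorem cost_cons_of_sign_eq {x y : ℤ} (t : List ℤ) (h : x.sign = y.sign) :
    cost (x :: t) = cost (y :: t) + |x| - |y| := by
  cases t with
  | nil => simp only [cost_singleton]; ring
  | cons f t => rw [cost_cons_cons, cost_cons_cons, h]; ring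

theorem three_mul_length_lt_cost {l : List ℤ} (hl : l ≠ []) (h : ∀ e ∈ l, 4 ≤ |e|) :
    3 * l.length < cost l := by
  induction l with
  | nil => contradiction
  | cons e t ih =>
    have he := h e List.mem_cons_self
    cases t with
    | nil => simp only [cost_singleton, List.length_singleton]; omega
    | cons f t =>
      have ht := ih (List.cons_ne_nil f t) fun x hx => h x (List.mem_cons_of_mem e hx)
      rw [cost_cons_cons]
      simp only [List.length_cons] at ht ⊢
      split_ifs <;> push_cast at ht ⊢ <;> omega

def growHead : List ℤ → List ℤ := List.modifyHead fun e => e + 2 * e.sign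

def consSameSign (l : List ℤ) : List ℤ := 4 * (l.headD 0).sign :: l

def consOppSign (l : List ℤ) : List ℤ := -4 * (l.headD 0).sign :: l

theorem growHead_injective : growHead.Injective :=
  List.modifyHead_injective Int.add_two_mul_sign_injective

theorem consSameSign_injective : consSameSign.Injective := fun _ _ h => (List.cons.inj h).2

theorem consOppSign_injective : consOppSign.Injective := fun _ _ h => (List.cons.inj h).2

theorem cost_growHead {e : ℤ} (he : e ≠ 0) (t : List ℤ) :
    cost (growHead (e :: t)) = cost (e :: t) + 2 := by
  rw [growHead, List.modifyHead_cons, cost_cons_of_sign_eq t (Int.sign_add_two_mul_sign e),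
    Int.abs_add_two_mul_sign he]
  ring

theorem cost_consSameSign {f : ℤ} (hf : f ≠ 0) (t : List ℤ) :
    cost (consSameSign (f :: t)) = cost (f :: t) + 3 := by
  have hsign : (4 * f.sign).sign = f.sign := by
    rw [Int.sign_mul, Int.sign_sign]; exact one_mul _
  rw [consSameSign, List.headD_cons, cost_cons_cons, if_pos hsign, abs_mul,
    Int.abs_sign_of_ne_zero hf]
  ring

theorem cost_consOppSign {f : ℤ} (hf : f ≠ 0) (t : List ℤ) :
    cost (consOppSign (f :: t)) = cost (f :: t) + 4 := by
  have hsign : (-4 * f.sign).sign ≠ f.sign := by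
    rcases Int.sign_eq_one_or_neg_one hf with hs | hs <;> rw [hs] <;> decide
  rw [consOppSign, List.headD_cons, cost_cons_cons, if_neg hsign, abs_mul,
    Int.abs_sign_of_ne_zero hf]
  ring

section Eset

variable {c : ℕ} {l : List ℤ}

theorem mem_Eset :
    l ∈ Eset c ↔ l ≠ [] ∧ (∀ e ∈ l, Even e ∧ 4 ≤ |e|) ∧ (c : ℤ) = cost l :=
  Iff.rfl

theorem ne_zero_of_mem_Eset (hl : l ∈ Eset c) {e : ℤ} (he : e ∈ l) : e ≠ 0 := by
  rintro rfl
  simpa using ((mem_Eset.1 hl).2.1 0 he).2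

theorem Eset_eq_empty_of_lt_four (hc : c < 4) : Eset c = ∅ := by
  refine Set.eq_empty_of_forall_notMem fun l hmem => ?_
  obtain ⟨hl, hadm, hcost⟩ := mem_Eset.1 hmem
  have := three_mul_length_lt_cost hl fun e he => (hadm e he).2
  have := List.length_pos_iff.2 hl
  omega

theorem Eset_four : Eset 4 = {[4], [-4]} := by
  ext l
  constructor
  · intro hmem
    obtain ⟨hl, hadm, hcost⟩ := mem_Eset.1 hmem
    have := three_mul_length_lt_cost hl fun e he => (hadm e he).2
    obtain ⟨e, rfl⟩ : ∃ e, l = [e] := by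
      match l with
      | [e] => exact ⟨e, rfl⟩
      | _ :: _ :: _ => simp only [List.length_cons] at this; omega
    rw [cost_singleton] at hcost
    simpa using (abs_eq (by norm_num : (0 : ℤ) ≤ 4)).1 (by exact_mod_cast hcost.symm)
  · rintro (rfl | rfl) <;> exact mem_Eset.2 ⟨by simp, by decide, by rw [cost_singleton]; rfl⟩

theorem growHead_mem_Eset (hl : l ∈ Eset c) : growHead l ∈ Eset (c + 2) := by
  obtain ⟨hne, hadm, hcost⟩ := mem_Eset.1 hl
  obtain ⟨e, t, rfl⟩ := List.exists_cons_of_ne_nil hne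
  obtain ⟨⟨heven, he⟩, htail⟩ := List.forall_mem_cons.1 hadm
  have he0 := ne_zero_of_mem_Eset hl List.mem_cons_self
  refine mem_Eset.2 ⟨by simp [growHead], ?_, ?_⟩
  · refine List.forall_mem_cons.2 ⟨⟨heven.add (even_two_mul _), ?_⟩, htail⟩
    rw [Int.abs_add_two_mul_sign he0]; omega
  · rw [cost_growHead he0]; push_cast; omega

theorem consSameSign_mem_Eset (hl : l ∈ Eset c) : consSameSign l ∈ Eset (c + 3) := by
  obtain ⟨hne, hadm, hcost⟩ := mem_Eset.1 hl
  obtain ⟨f, t, rfl⟩ := List.exists_cons_of_ne_nil hne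
  have hf0 := ne_zero_of_mem_Eset hl List.mem_cons_self
  have hcost' := cost_consSameSign hf0 t
  rw [consSameSign, List.headD_cons] at hcost' ⊢
  refine mem_Eset.2 ⟨List.cons_ne_nil _ _, List.forall_mem_cons.2 ⟨⟨?_, ?_⟩, hadm⟩, ?_⟩
  · exact ⟨2 * f.sign, by ring⟩
  · rw [abs_mul, Int.abs_sign_of_ne_zero hf0]; norm_num
  · rw [hcost']; push_cast; omega

theorem consOppSign_mem_Eset (hl : l ∈ Eset c) : consOppSign l ∈ Eset (c + 4) := by
  obtain ⟨hne, hadm, hcost⟩ := mem_Eset.1 hl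
  obtain ⟨f, t, rfl⟩ := List.exists_cons_of_ne_nil hne
  have hf0 := ne_zero_of_mem_Eset hl List.mem_cons_self
  have hcost' := cost_consOppSign hf0 t
  rw [consOppSign, List.headD_cons] at hcost' ⊢
  refine mem_Eset.2 ⟨List.cons_ne_nil _ _, List.forall_mem_cons.2 ⟨⟨?_, ?_⟩, hadm⟩, ?_⟩
  · exact ⟨-2 * f.sign, by ring⟩
  · rw [abs_mul, Int.abs_sign_of_ne_zero hf0]; norm_num
  · rw [hcost']; push_cast; omega

theorem mem_growHead_image {e : ℤ} {t : List ℤ} (hl : e :: t ∈ Eset (c + 2))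
    (he : 6 ≤ |e|) : e :: t ∈ growHead '' Eset c := by
  obtain ⟨-, hadm, hcost⟩ := mem_Eset.1 hl
  obtain ⟨⟨heven, -⟩, htail⟩ := List.forall_mem_cons.1 hadm
  set g := e - 2 * e.sign with hg
  have hsign : g.sign = e.sign := Int.sign_sub_two_mul_sign (by omega)
  have hg0 : g ≠ 0 := fun h => ne_zero_of_mem_Eset hl List.mem_cons_self <|
    Int.sign_eq_zero_iff_zero.1 (by rw [← hsign, h, Int.sign_zero])
  have hgrow : growHead (g :: t) = e :: t := by
    rw [growHead, List.modifyHead_cons, hsign, hg]; ring_nf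
  have habs : |e| = |g| + 2 := by
    rw [← Int.abs_add_two_mul_sign hg0, hsign, hg]; ring_nf
  have hcost' := cost_growHead hg0 t
  rw [hgrow] at hcost'
  refine ⟨g :: t, mem_Eset.2 ⟨List.cons_ne_nil _ _,
    List.forall_mem_cons.2 ⟨⟨heven.sub (even_two_mul _), by omega⟩, htail⟩, ?_⟩, hgrow⟩
  push_cast at hcost; omega

theorem mem_consSameSign_image {e f : ℤ} {t : List ℤ} (hl : e :: f :: t ∈ Eset (c + 3))
    (he : |e| = 4) (hsign : e.sign = f.sign) : e :: f :: t ∈ consSameSign '' Eset c := by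
  obtain ⟨-, hadm, hcost⟩ := mem_Eset.1 hl
  have hf0 := ne_zero_of_mem_Eset hl (List.mem_cons_of_mem e List.mem_cons_self)
  have hcons : consSameSign (f :: t) = e :: f :: t := by
    rw [consSameSign, List.headD_cons, ← hsign, ← he, mul_comm, Int.sign_mul_abs]
  have hcost' := cost_consSameSign hf0 t
  rw [hcons] at hcost'
  refine ⟨f :: t, mem_Eset.2 ⟨List.cons_ne_nil _ _, (List.forall_mem_cons.1 hadm).2, ?_⟩,
    hcons⟩
  push_cast at hcost; omega

theorem mem_consOppSign_image {e f : ℤ} {t : List ℤ} (hl : e :: f :: t ∈ Eset (c + 4))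
    (he : |e| = 4) (hsign : e.sign ≠ f.sign) : e :: f :: t ∈ consOppSign '' Eset c := by
  obtain ⟨-, hadm, hcost⟩ := mem_Eset.1 hl
  have he0 := ne_zero_of_mem_Eset hl List.mem_cons_self
  have hf0 := ne_zero_of_mem_Eset hl (List.mem_cons_of_mem e List.mem_cons_self)
  have hcons : consOppSign (f :: t) = e :: f :: t := by
    rw [consOppSign, List.headD_cons, neg_mul, ← mul_neg,
      ← Int.sign_eq_neg_of_sign_ne he0 hf0 hsign, ← he, mul_comm, Int.sign_mul_abs]
  have hcost' := cost_consOppSign hf0 t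
  rw [hcons] at hcost'
  refine ⟨f :: t, mem_Eset.2 ⟨List.cons_ne_nil _ _, (List.forall_mem_cons.1 hadm).2, ?_⟩,
    hcons⟩
  push_cast at hcost; omega

theorem Eset_add_five (n : ℕ) :
    Eset (n + 5) = growHead '' Eset (n + 3) ∪ consSameSign '' Eset (n + 2) ∪
      consOppSign '' Eset (n + 1) := by
  ext l
  constructor
  · intro hl
    obtain ⟨hne, hadm, hcost⟩ := mem_Eset.1 hl
    obtain ⟨e, t, rfl⟩ := List.exists_cons_of_ne_nil hne
    obtain ⟨⟨heven, he⟩, -⟩ := List.forall_mem_cons.1 hadm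
    rcases le_or_gt 6 |e| with he6 | he6
    · exact .inl (.inl (mem_growHead_image hl he6))
    have he4 : |e| = 4 := by obtain ⟨k, hk⟩ := even_abs.2 heven; omega
    cases t with
    | nil => rw [cost_singleton] at hcost; omega
    | cons f t =>
      by_cases hsign : e.sign = f.sign
      · exact .inl (.inr (mem_consSameSign_image hl he4 hsign))
      · exact .inr (mem_consOppSign_image hl he4 hsign)
  · rintro ((⟨x, hx, rfl⟩ | ⟨x, hx, rfl⟩) | ⟨x, hx, rfl⟩)
    · exact growHead_mem_Eset hx
    · exact consSameSign_mem_Eset hx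
    · exact consOppSign_mem_Eset hx

theorem abs_headD_growHead (hl : l ∈ Eset c) : 6 ≤ |(growHead l).headD 0| := by
  obtain ⟨e, t, rfl⟩ := List.exists_cons_of_ne_nil (mem_Eset.1 hl).1
  rw [growHead, List.modifyHead_cons, List.headD_cons,
    Int.abs_add_two_mul_sign (ne_zero_of_mem_Eset hl List.mem_cons_self)]
  linarith [((mem_Eset.1 hl).2.1 e List.mem_cons_self).2]

theorem abs_headD_consSameSign (hl : l ∈ Eset c) : |(consSameSign l).headD 0| = 4 := by
  obtain ⟨f, t, rfl⟩ := List.exists_cons_of_ne_nil (mem_Eset.1 hl).1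
  rw [consSameSign, List.headD_cons, List.headD_cons, abs_mul,
    Int.abs_sign_of_ne_zero (ne_zero_of_mem_Eset hl List.mem_cons_self)]
  rfl

theorem abs_headD_consOppSign (hl : l ∈ Eset c) : |(consOppSign l).headD 0| = 4 := by
  obtain ⟨f, t, rfl⟩ := List.exists_cons_of_ne_nil (mem_Eset.1 hl).1
  rw [consOppSign, List.headD_cons, List.headD_cons, abs_mul,
    Int.abs_sign_of_ne_zero (ne_zero_of_mem_Eset hl List.mem_cons_self)]
  rfl

end Eset

theorem disjoint_growHead_consSameSign (a b : ℕ) :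
    Disjoint (growHead '' Eset a) (consSameSign '' Eset b) := by
  rw [Set.disjoint_left]
  rintro _ ⟨x, hx, rfl⟩ ⟨y, hy, hxy⟩
  have := abs_headD_growHead hx
  rw [← hxy, abs_headD_consSameSign hy] at this
  norm_num at this

theorem disjoint_growHead_consOppSign (a b : ℕ) :
    Disjoint (growHead '' Eset a) (consOppSign '' Eset b) := by
  rw [Set.disjoint_left]
  rintro _ ⟨x, hx, rfl⟩ ⟨y, hy, hxy⟩
  have := abs_headD_growHead hx
  rw [← hxy, abs_headD_consOppSign hy] at this
  norm_num at this

theorem disjoint_consSameSign_consOppSign (a b : ℕ) :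
    Disjoint (consSameSign '' Eset a) (consOppSign '' Eset b) := by
  rw [Set.disjoint_left]
  rintro _ ⟨x, hx, rfl⟩ ⟨y, -, hxy⟩
  obtain ⟨hhead, rfl⟩ := List.cons.inj hxy
  obtain ⟨f, t, rfl⟩ := List.exists_cons_of_ne_nil (mem_Eset.1 hx).1
  rcases Int.sign_eq_one_or_neg_one (ne_zero_of_mem_Eset hx List.mem_cons_self) with hs | hs <;>
    simp [hs] at hhead

theorem Eset_finite (c : ℕ) : (Eset c).Finite := by
  induction c using Nat.strong_induction_on with
  | _ c ih =>
    match c, ih with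
    | 0, _ | 1, _ | 2, _ | 3, _ => simp [Eset_eq_empty_of_lt_four]
    | 4, _ => rw [Eset_four]; exact Set.toFinite _
    | n + 5, ih =>
      rw [Eset_add_five]
      exact (((ih _ (by omega)).image _).union ((ih _ (by omega)).image _)).union
        ((ih _ (by omega)).image _)

theorem Fcard_eq_ncard (c : ℕ) : Fcard c = (Eset c).ncard := Nat.card_coe_set_eq _

theorem Fcard_add_five (n : ℕ) :
    Fcard (n + 5) = Fcard (n + 3) + Fcard (n + 2) + Fcard (n + 1) := by
  simp only [Fcard_eq_ncard]
  rw [Eset_add_five,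
    Set.ncard_union_eq (Set.disjoint_union_left.2
        ⟨disjoint_growHead_consOppSign _ _, disjoint_consSameSign_consOppSign _ _⟩)
      (((Eset_finite _).image _).union ((Eset_finite _).image _)) ((Eset_finite _).image _),
    Set.ncard_union_eq (disjoint_growHead_consSameSign _ _) ((Eset_finite _).image _)
      ((Eset_finite _).image _),
    Set.ncard_image_of_injective _ growHead_injective,
    Set.ncard_image_of_injective _ consSameSign_injective,
    Set.ncard_image_of_injective _ consOppSign_injective]

theorem Fcard_recursion :
    Fcard 4 = 2 ∧ Fcard 5 = 0 ∧ Fcard 6 = 2 ∧ Fcard 7 = 2 ∧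
      ∀ c : ℕ, 8 ≤ c → Fcard c = Fcard (c - 2) + Fcard (c - 3) + Fcard (c - 4) := by
  have hsmall : ∀ c < 4, Fcard c = 0 := fun c hc => by
    rw [Fcard_eq_ncard, Eset_eq_empty_of_lt_four hc, Set.ncard_empty]
  have h4 : Fcard 4 = 2 := by rw [Fcard_eq_ncard, Eset_four, Set.ncard_pair (by simp)]
  have h5 : Fcard 5 = 0 := by simp [Fcard_add_five 0, hsmall]
  refine ⟨h4, h5, ?_, ?_, fun c hc => ?_⟩
  · simp [Fcard_add_five 1, h4, hsmall]
  · simp [Fcard_add_five 2, h5, h4, hsmall]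
  · obtain ⟨n, rfl⟩ := Nat.exists_eq_add_of_le' hc
    exact Fcard_add_five (n + 3)
end

section
/- Let T(c) be the set of tuples (b_1,…,b_k) of integers with every b_i ≥ 2 and Σ b_i − (k−1) = c. The map g defined by: g(b_1,…,b_{k−2},2,2) = (b_1,…,b_{k−2}); g(b_1,…,b_{k−1},2) = (b_1,…,b_{k−1}−1,2) when b_{k−1} ≥ 3; g(b_1,…,b_{k−1},3) = (b_1,…,b_{k−1}+1); g(b_1,…,b_{k−1},b_k) = (b_1,…,b_{k−1},b_k−2) when b_k ≥ 4, is a bijection from T(c) onto T(c−2) ⊔ T(c−1) ⊔ T(c−2) for c ≥ 5 (the first and fourth cases land in the two copies of T(c−2); the second and third in T(c−1)). -/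
/-!
Work on the reversed tuple, so that `g` edits its head. Each of the four moves shifts the
statistic `Σ bᵢ − (k − 1)` by a fixed amount, and each is undone by an explicit move `gAuxInv`,
which can tell the two cases landing in `T(c − 1)` apart by whether the tuple ends in `2`. The
bound on `c` only excludes the tuples too short for their case, `(2)`, `(3)` and `(2, 2)`.
-/

/-- `Tset c` is the set of nonempty tuples `(b_1,…,b_k)` of integers with each
`b_i ≥ 2` and `Σ b_i − (k−1) = c`. -/
def Tset (c : ℕ) : Set (List ℤ) :=
  {l | l ≠ [] ∧ (∀ b ∈ l, 2 ≤ b) ∧ l.sum - ((l.length : ℤ) - 1) = (c : ℤ)}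

/-- The map `g` acting on the reversed tuple: the four cases correspond to
tuples ending in `(2,2)`; in `(b,2)` with `b ≥ 3`; in `3`; and in `b_k ≥ 4`. -/
def gAux : List ℤ → List ℤ ⊕ List ℤ ⊕ List ℤ
  | 2 :: 2 :: rest => Sum.inl rest
  | 2 :: b :: rest => Sum.inr (Sum.inl (2 :: (b - 1) :: rest))
  | 3 :: b :: rest => Sum.inr (Sum.inl ((b + 1) :: rest))
  | b :: rest => Sum.inr (Sum.inr ((b - 2) :: rest))
  | [] => Sum.inr (Sum.inr [])

def g (l : List ℤ) : List ℤ ⊕ List ℤ ⊕ List ℤ :=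
  Sum.map List.reverse (Sum.map List.reverse List.reverse) (gAux l.reverse)

/-- The target `T(c−2) ⊔ T(c−1) ⊔ T(c−2)`: the first and fourth cases of `g`
land in the two copies of `T(c−2)`, the second and third in `T(c−1)`. -/
def target (c : ℕ) : Set (List ℤ ⊕ List ℤ ⊕ List ℤ) :=
  {x | match x with
       | Sum.inl l => l ∈ Tset (c - 2)
       | Sum.inr (Sum.inl l) => l ∈ Tset (c - 1)
       | Sum.inr (Sum.inr l) => l ∈ Tset (c - 2)}

open List Set

lemma Function.Involutive.sumMap {α β : Type*} {f : α → α} {g : β → β}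
    (hf : f.Involutive) (hg : g.Involutive) : (Sum.map f g).Involutive := by
  rintro (a | b)
  · simp [hf a]
  · simp [hg b]

lemma Function.Involutive.bijOn_of_mapsTo {α : Type*} {f : α → α} {s : Set α}
    (hf : f.Involutive) (h : MapsTo f s s) : BijOn f s s :=
  InvOn.bijOn ⟨fun x _ => hf x, fun x _ => hf x⟩ h h

lemma nil_notMem_Tset (c : ℕ) : [] ∉ Tset c := fun h => h.1 rfl

lemma cons_mem_Tset {c : ℕ} {a : ℤ} {l : List ℤ} :
    a :: l ∈ Tset c ↔ 2 ≤ a ∧ (∀ b ∈ l, 2 ≤ b) ∧ a + l.sum - l.length = c := by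
  simp [Tset, and_assoc]

lemma reverse_mem_Tset {c : ℕ} {l : List ℤ} : l.reverse ∈ Tset c ↔ l ∈ Tset c := by
  simp [Tset, sum_reverse]

lemma mapsTo_sumMap_reverse_target (c : ℕ) :
    MapsTo (Sum.map reverse (Sum.map reverse reverse)) (target c) (target c) := by
  rintro (l | l | l) hl <;> exact reverse_mem_Tset.2 hl

lemma gAux_two_cons {b : ℤ} (hb : b ≠ 2) (r : List ℤ) :
    gAux (2 :: b :: r) = Sum.inr (Sum.inl (2 :: (b - 1) :: r)) := by
  simp [gAux]

lemma gAux_three_cons (b : ℤ) (r : List ℤ) :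
    gAux (3 :: b :: r) = Sum.inr (Sum.inl ((b + 1) :: r)) := rfl

lemma gAux_cons {a : ℤ} (h2 : a ≠ 2) (h3 : a ≠ 3) (r : List ℤ) :
    gAux (a :: r) = Sum.inr (Sum.inr ((a - 2) :: r)) := by
  rcases r with _ | ⟨b, r⟩ <;> simp [gAux, h2, h3]

def gAuxInv : List ℤ ⊕ List ℤ ⊕ List ℤ → List ℤ
  | Sum.inl l => 2 :: 2 :: l
  | Sum.inr (Sum.inl (2 :: b :: r)) => 2 :: (b + 1) :: r
  | Sum.inr (Sum.inl (b :: r)) => 3 :: (b - 1) :: r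
  | Sum.inr (Sum.inr (b :: r)) => (b + 2) :: r
  | Sum.inr (Sum.inl []) | Sum.inr (Sum.inr []) => []

lemma gAuxInv_inr_inl_two_cons (b : ℤ) (r : List ℤ) :
    gAuxInv (Sum.inr (Sum.inl (2 :: b :: r))) = 2 :: (b + 1) :: r := rfl

lemma gAuxInv_inr_inl_cons {a : ℤ} (h : a ≠ 2) (r : List ℤ) :
    gAuxInv (Sum.inr (Sum.inl (a :: r))) = 3 :: (a - 1) :: r := by
  rcases r with _ | ⟨b, r⟩ <;> simp [gAuxInv, h]

lemma gAuxInv_inr_inr_cons (a : ℤ) (r : List ℤ) :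
    gAuxInv (Sum.inr (Sum.inr (a :: r))) = (a + 2) :: r := rfl

lemma gAux_mem_target_and_gAuxInv_gAux {c : ℕ} (hc : 4 ≤ c) {l : List ℤ} (hl : l ∈ Tset c) :
    gAux l ∈ target c ∧ gAuxInv (gAux l) = l := by
  rcases l with _ | ⟨a, t⟩
  · exact absurd hl (nil_notMem_Tset c)
  obtain ⟨ha, ht, hsum⟩ := cons_mem_Tset.1 hl
  by_cases ha2 : a = 2
  · subst ha2
    rcases t with _ | ⟨b, r⟩
    · simp only [sum_nil, length_nil] at hsum; omega
    simp only [forall_mem_cons, sum_cons, length_cons] at ht hsum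
    obtain ⟨hb, hr⟩ := ht
    by_cases hb2 : b = 2
    · subst hb2
      refine ⟨⟨?_, hr, by omega⟩, rfl⟩
      rintro rfl
      simp only [sum_nil, length_nil] at hsum
      omega
    · rw [gAux_two_cons hb2]
      refine ⟨cons_mem_Tset.2 ⟨le_rfl, forall_mem_cons.2 ⟨by omega, hr⟩, ?_⟩,
        by simp [gAuxInv_inr_inl_two_cons]⟩
      simp only [sum_cons, length_cons]
      omega
  by_cases ha3 : a = 3
  · subst ha3
    rcases t with _ | ⟨b, r⟩
    · simp only [sum_nil, length_nil] at hsum; omega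
    simp only [forall_mem_cons, sum_cons, length_cons] at ht hsum
    rw [gAux_three_cons]
    exact ⟨cons_mem_Tset.2 ⟨by omega, ht.2, by omega⟩,
      by rw [gAuxInv_inr_inl_cons (by omega)]; simp⟩
  rw [gAux_cons ha2 ha3]
  exact ⟨cons_mem_Tset.2 ⟨by omega, ht, by omega⟩, by simp [gAuxInv_inr_inr_cons]⟩

lemma gAuxInv_mem_Tset_and_gAux_gAuxInv {c : ℕ} (hc : 4 ≤ c) {x : List ℤ ⊕ List ℤ ⊕ List ℤ}
    (hx : x ∈ target c) :
    gAuxInv x ∈ Tset c ∧ gAux (gAuxInv x) = x := by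
  rcases x with l | l | l
  · obtain ⟨-, hl, hsum⟩ := hx
    refine ⟨cons_mem_Tset.2 ⟨le_rfl, forall_mem_cons.2 ⟨le_rfl, hl⟩, ?_⟩, rfl⟩
    simp only [sum_cons, length_cons]
    omega
  · rcases l with _ | ⟨a, t⟩
    · exact absurd hx (nil_notMem_Tset _)
    obtain ⟨ha, ht, hsum⟩ := cons_mem_Tset.1 hx
    by_cases ha2 : a = 2
    · subst ha2
      rcases t with _ | ⟨b, r⟩
      · simp only [sum_nil, length_nil] at hsum; omega
      simp only [forall_mem_cons, sum_cons, length_cons] at ht hsum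
      rw [gAuxInv_inr_inl_two_cons, gAux_two_cons (by omega)]
      refine ⟨cons_mem_Tset.2 ⟨le_rfl, forall_mem_cons.2 ⟨by omega, ht.2⟩, ?_⟩, by simp⟩
      simp only [sum_cons, length_cons]
      omega
    · rw [gAuxInv_inr_inl_cons ha2, gAux_three_cons]
      refine ⟨cons_mem_Tset.2 ⟨by omega, forall_mem_cons.2 ⟨by omega, ht⟩, ?_⟩, by simp⟩
      simp only [sum_cons, length_cons]
      omega
  · rcases l with _ | ⟨a, t⟩
    · exact absurd hx (nil_notMem_Tset _)
    obtain ⟨ha, ht, hsum⟩ := cons_mem_Tset.1 hx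
    rw [gAuxInv_inr_inr_cons, gAux_cons (by omega) (by omega)]
    exact ⟨cons_mem_Tset.2 ⟨by omega, ht, by omega⟩, by simp⟩

lemma bijOn_gAux {c : ℕ} (hc : 4 ≤ c) : BijOn gAux (Tset c) (target c) :=
  InvOn.bijOn
    ⟨fun _ hl => (gAux_mem_target_and_gAuxInv_gAux hc hl).2,
      fun _ hx => (gAuxInv_mem_Tset_and_gAux_gAuxInv hc hx).2⟩
    (fun _ hl => (gAux_mem_target_and_gAuxInv_gAux hc hl).1)
    (fun _ hx => (gAuxInv_mem_Tset_and_gAux_gAuxInv hc hx).1)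

theorem g_bijection (c : ℕ) (hc : 5 ≤ c) : Set.BijOn g (Tset c) (target c) := by
  have hrev : BijOn reverse (Tset c) (Tset c) :=
    reverse_involutive.bijOn_of_mapsTo fun _ => reverse_mem_Tset.2
  have hrev3 : BijOn (Sum.map reverse (Sum.map reverse reverse)) (target c) (target c) :=
    (reverse_involutive.sumMap (reverse_involutive.sumMap reverse_involutive)).bijOn_of_mapsTo
      (mapsTo_sumMap_reverse_target c)
  exact hrev3.comp ((bijOn_gAux (by omega)).comp hrev)
end

section
/- For the family T(c) of tuples (b_1,…,b_k) with b_i ≥ 2 and Σb_i − (k−1) = c, define M(c) = |{tuples in T(c) ending with the pattern (2, 3^{[m]}, 2, 2) for some m ≥ 1}|. Then for c ≥ 6, M(c) = M(c−2) + j(c−6) + (−1)^c·[3 ∣ c], where j(d) = (2^d−(−1)^d)/3, with initial values M(4)=M(5)=0. -/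
/-- The continuant of a subtractive continued fraction: the value of `[b_1,…,b_k]₋`
is `cont (b_2,…,b_k) / cont (b_1,…,b_k)`.  The tuple represents a knot (rather than a
2-component link) exactly when `cont` of the tuple is odd. -/
def cont : List ℤ → ℤ
  | [] => 1
  | [b] => b
  | b :: b' :: rest => b * cont (b' :: rest) - cont rest

/-- `M c` counts the tuples in `Tset c` representing knots that end with the pattern
`(2, 3^{[m]}, 2, 2)` for some `m ≥ 1` (the set `K_{2 3^{[m≥1]} 2 2}(c)`). -/
noncomputable def M (c : ℕ) : ℕ :=
  Nat.card {l : List ℤ | l ∈ Tset c ∧ Odd (cont l) ∧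
    ∃ m : ℕ, 1 ≤ m ∧ ∃ pre : List ℤ, l = pre ++ [2] ++ List.replicate m 3 ++ [2, 2]}

open Finset

/-! Write a counted tuple as `pre ++ [2] ++ 3^[m] ++ [2, 2]`. Its prefix ranges over the tuples of
weight `w = c - 4 - 2m` (weight `Σ (b_i - 1)`), and those of weight `w + 1` arise from those of
weight `w` by prepending `2` or by raising the first entry. Modulo 2 these moves send the pair
`(x, y) = (cont L, cont L.tail)` to `(y, x)` and `(x + y, y)`; as consecutive continuants are
coprime, exactly two of `x`, `y`, `x + y` are odd. Hence the number `N_m(w)` of prefixes giving an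
odd continuant satisfies `N_m(w + 1) + N_m(w) = 2^w` for `w ≥ 1`, so `N_m(w + 2) = N_m(w) + 2^w`
up to a defect at `w = 0`, which occurs exactly when `m ≡ 1 (mod 3)`. Summing over `m`,
`M(c) - M(c - 2)` is the geometric sum `j(c - 6) - (c mod 2)` plus boundary terms read off from the
parities of the continuants of the suffix, which are 3-periodic in `m`. -/

lemma cont_cons_of_ne_nil (b : ℤ) {l : List ℤ} (hl : l ≠ []) :
    cont (b :: l) = b * cont l - cont l.tail := by
  obtain ⟨b', l', rfl⟩ := List.exists_cons_of_ne_nil hl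
  rfl

lemma cont_add_one_cons (b : ℤ) (l : List ℤ) : cont ((b + 1) :: l) = cont (b :: l) + cont l := by
  rcases l with _ | ⟨b', l'⟩
  · rfl
  · simp only [cont]; ring

lemma isCoprime_cont_tail : ∀ l : List ℤ, IsCoprime (cont l) (cont l.tail)
  | [] => isCoprime_one_left
  | [_] => isCoprime_one_right
  | b :: b' :: l => by
    have h : IsCoprime (-cont l + cont (b' :: l) * b) (cont (b' :: l)) :=
      (isCoprime_cont_tail (b' :: l)).neg_right.symm.add_mul_left_left b
    show IsCoprime (b * cont (b' :: l) - cont l) (cont (b' :: l))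
    rwa [sub_eq_neg_add, mul_comm]

lemma odd_cont_or_odd_cont_tail (l : List ℤ) : Odd (cont l) ∨ Odd (cont l.tail) := by
  by_contra! h
  obtain ⟨hl, ht⟩ := h
  have h2 := (isCoprime_cont_tail l).isUnit_of_dvd'
    (Int.not_odd_iff_even.mp hl).two_dvd (Int.not_odd_iff_even.mp ht).two_dvd
  norm_num [Int.isUnit_iff] at h2

lemma odd_cont_moves_count_eq_two (b : ℤ) (T : List ℤ) :
    ((if Odd (cont (2 :: b :: T)) then 1 else 0) + (if Odd (cont ((b + 1) :: T)) then 1 else 0) +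
      (if Odd (cont (b :: T)) then 1 else 0) : ℕ) = 2 := by
  have h := odd_cont_or_odd_cont_tail (b :: T)
  rw [cont_cons_of_ne_nil 2 (List.cons_ne_nil b T), cont_add_one_cons]
  simp only [List.tail_cons, Int.odd_iff] at h ⊢
  split_ifs <;> omega

def tuples : ℕ → Finset (List ℤ)
  | 0 => {[]}
  | w + 1 => (tuples w).image (List.cons 2) ∪
      {l ∈ tuples w | l ≠ []}.image (List.modifyHead (· + 1))

lemma mem_tuples {w : ℕ} {l : List ℤ} :
    l ∈ tuples w ↔ (∀ b ∈ l, 2 ≤ b) ∧ l.sum = w + l.length := by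
  induction w generalizing l with
  | zero =>
    simp only [tuples, mem_singleton, CharP.cast_eq_zero, zero_add]
    refine ⟨by rintro rfl; simp, fun ⟨hl, hsum⟩ => ?_⟩
    have := List.card_nsmul_le_sum l 2 hl
    rw [nsmul_eq_mul] at this
    exact List.length_eq_zero_iff.mp (by omega)
  | succ w ih =>
    simp only [tuples, mem_union, mem_image, mem_filter, ih]
    constructor
    · rintro (⟨t, ⟨ht, hsum⟩, rfl⟩ | ⟨_ | ⟨b, t⟩, ⟨⟨ht, hsum⟩, hne⟩, rfl⟩)
      · simp only [List.mem_cons, forall_eq_or_imp, List.sum_cons, List.length_cons]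
        exact ⟨⟨le_rfl, ht⟩, by push_cast; omega⟩
      · exact absurd rfl hne
      · simp only [List.mem_cons, forall_eq_or_imp, List.modifyHead_cons, List.sum_cons,
          List.length_cons] at ht hsum ⊢
        exact ⟨⟨by omega, ht.2⟩, by push_cast at hsum ⊢; omega⟩
    · rintro ⟨hl, hsum⟩
      rcases l with _ | ⟨b, t⟩
      · simp only [List.sum_nil, List.length_nil, CharP.cast_eq_zero, add_zero] at hsum
        omega
      simp only [List.mem_cons, forall_eq_or_imp, List.sum_cons, List.length_cons] at hl hsum
      push_cast at hsum
      rcases eq_or_lt_of_le hl.1 with hb | hb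
      · exact Or.inl ⟨t, ⟨hl.2, by omega⟩, by rw [hb]⟩
      · refine Or.inr ⟨(b - 1) :: t, ⟨⟨?_, ?_⟩, List.cons_ne_nil _ _⟩, by simp⟩
        · simpa only [List.mem_cons, forall_eq_or_imp] using ⟨by omega, hl.2⟩
        · simp only [List.sum_cons, List.length_cons]; push_cast; omega

lemma tuples_one : tuples 1 = {[2]} := by decide

lemma ne_nil_of_mem_tuples {w : ℕ} (hw : w ≠ 0) {l : List ℤ} (hl : l ∈ tuples w) : l ≠ [] := by
  rintro rfl
  have h := (mem_tuples.mp hl).2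
  simp only [List.sum_nil, List.length_nil, CharP.cast_eq_zero, add_zero] at h
  omega

lemma sum_tuples_succ {β : Type*} [AddCommMonoid β] (f : List ℤ → β) {w : ℕ} (hw : w ≠ 0) :
    ∑ l ∈ tuples (w + 1), f l = ∑ l ∈ tuples w, (f (2 :: l) + f (l.modifyHead (· + 1))) := by
  have hne : ∀ l ∈ tuples w, l ≠ [] := fun l => ne_nil_of_mem_tuples hw
  have hdisj : Disjoint ((tuples w).image (List.cons 2))
      ((tuples w).image (List.modifyHead (· + 1))) := by
    simp only [disjoint_left, mem_image]
    rintro _ ⟨t, -, rfl⟩ ⟨_ | ⟨b, s⟩, hs, hbs⟩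
    · exact hne [] hs rfl
    · have := (mem_tuples.mp hs).1 b List.mem_cons_self
      simp only [List.modifyHead_cons, List.cons.injEq] at hbs
      omega
  have hinj : Set.InjOn (List.modifyHead (· + 1 : ℤ → ℤ)) (tuples w) := by
    rintro (_ | ⟨a, s⟩) hs (_ | ⟨b, t⟩) ht hst
    · rfl
    · exact absurd rfl (hne [] hs)
    · exact absurd rfl (hne [] ht)
    · simp only [List.modifyHead_cons, List.cons.injEq, add_left_inj] at hst
      rw [hst.1, hst.2]
  rw [tuples, filter_true_of_mem hne, sum_union hdisj,
    sum_image fun _ _ _ _ h => List.cons_injective h, sum_image hinj, sum_add_distrib]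

lemma card_tuples_succ (w : ℕ) : #(tuples (w + 1)) = 2 ^ w := by
  induction w with
  | zero => rw [tuples_one]; rfl
  | succ w ih =>
    rw [card_eq_sum_ones, sum_tuples_succ _ w.succ_ne_zero, sum_const, ih, smul_eq_mul, pow_succ]

def numOddPrefixes (S : List ℤ) (w : ℕ) : ℕ := #{pre ∈ tuples w | Odd (cont (pre ++ S))}

section numOddPrefixes

variable {S : List ℤ}

lemma numOddPrefixes_zero : numOddPrefixes S 0 = if Odd (cont S) then 1 else 0 := by
  simp [numOddPrefixes, tuples, filter_singleton, apply_ite]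

lemma numOddPrefixes_one (hS : S ≠ []) :
    numOddPrefixes S 1 = if Odd (cont S.tail) then 1 else 0 := by
  have h : Odd (cont (2 :: S)) ↔ Odd (cont S.tail) := by
    rw [cont_cons_of_ne_nil 2 hS, Int.odd_iff, Int.odd_iff]
    omega
  simp [numOddPrefixes, tuples_one, filter_singleton, apply_ite, h]

lemma numOddPrefixes_succ_add {w : ℕ} (hw : w ≠ 0) :
    numOddPrefixes S (w + 1) + numOddPrefixes S w = 2 * #(tuples w) := by
  simp only [numOddPrefixes, card_filter]
  rw [sum_tuples_succ _ hw, ← sum_add_distrib, card_eq_sum_ones, mul_sum]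
  refine sum_congr rfl fun l hl => ?_
  obtain ⟨b, T, rfl⟩ := List.exists_cons_of_ne_nil (ne_nil_of_mem_tuples hw hl)
  exact odd_cont_moves_count_eq_two b (T ++ S)

lemma numOddPrefixes_add_two (hS : S ≠ []) (w : ℕ) :
    (numOddPrefixes S (w + 2) : ℤ) = numOddPrefixes S w + 2 ^ w -
      if w = 0 ∧ Odd (cont S) ∧ Odd (cont S.tail) then 1 else 0 := by
  rcases w with _ | w
  · have h := numOddPrefixes_succ_add (S := S) one_ne_zero
    have := odd_cont_or_odd_cont_tail S
    rw [tuples_one, card_singleton, numOddPrefixes_one hS] at h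
    rw [numOddPrefixes_zero]
    split_ifs at h ⊢ <;> simp_all
  · have h₁ := numOddPrefixes_succ_add (S := S) (w + 1).succ_ne_zero
    have h₂ := numOddPrefixes_succ_add (S := S) w.succ_ne_zero
    rw [card_tuples_succ] at h₁ h₂
    simp only [add_eq_zero, one_ne_zero, and_false, false_and, if_false, sub_zero]
    push_cast [pow_succ] at h₁ h₂ ⊢
    linarith

end numOddPrefixes

def patternSuffix (m : ℕ) : List ℤ := [2] ++ List.replicate m 3 ++ [2, 2]

lemma cont_replicate_three_append_mod_two (m : ℕ) :
    cont (List.replicate m 3 ++ [2, 2]) % 2 = (if m % 3 = 2 then 0 else 1) ∧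
      cont (List.replicate m (3 : ℤ) ++ [2, 2]).tail % 2 = if m % 3 = 0 then 0 else 1 := by
  induction m with
  | zero => decide
  | succ m ih =>
    rw [List.replicate_succ, List.cons_append, List.tail_cons,
      cont_cons_of_ne_nil _ (by simp)]
    split_ifs at ih ⊢ <;> omega

lemma odd_cont_patternSuffix (m : ℕ) : Odd (cont (patternSuffix m)) ↔ m % 3 ≠ 0 := by
  have h := (cont_replicate_three_append_mod_two m).2
  rw [patternSuffix, List.append_assoc, List.singleton_append, cont_cons_of_ne_nil _ (by simp),
    Int.odd_iff]
  split_ifs at h <;> omega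

lemma odd_cont_tail_patternSuffix (m : ℕ) : Odd (cont (patternSuffix m).tail) ↔ m % 3 ≠ 2 := by
  have h := (cont_replicate_three_append_mod_two m).1
  rw [patternSuffix, List.append_assoc, List.singleton_append, List.tail_cons, Int.odd_iff]
  split_ifs at h <;> omega

lemma numOddPrefixes_patternSuffix_add_two (m w : ℕ) :
    (numOddPrefixes (patternSuffix m) (w + 2) : ℤ) = numOddPrefixes (patternSuffix m) w + 2 ^ w -
      if w = 0 ∧ m % 3 = 1 then 1 else 0 := by
  simp only [numOddPrefixes_add_two (by simp [patternSuffix] : patternSuffix m ≠ []),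
    odd_cont_patternSuffix, odd_cont_tail_patternSuffix]
  split_ifs <;> omega

lemma List.replicate_append_cons_inj_left {α : Type*} {a b : α} (hab : a ≠ b) :
    ∀ {m n : ℕ} {X Y : List α},
      List.replicate m a ++ b :: X = List.replicate n a ++ b :: Y → m = n
  | 0, 0, _, _, _ => rfl
  | 0, _ + 1, _, _, h => absurd (List.cons.inj h).1 hab.symm
  | _ + 1, 0, _, _, h => absurd (List.cons.inj h).1 hab
  | _ + 1, _ + 1, _, _, h =>
    congrArg (· + 1) (replicate_append_cons_inj_left hab (List.cons.inj h).2)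

lemma eq_of_append_patternSuffix_eq {m n : ℕ} {pre pre' : List ℤ}
    (h : pre ++ patternSuffix m = pre' ++ patternSuffix n) : m = n := by
  have h' := congrArg List.reverse h
  simp only [patternSuffix, List.cons_append, List.nil_append, List.reverse_append,
    List.reverse_cons, List.reverse_nil, List.reverse_replicate, List.append_assoc, List.cons.injEq,
    true_and] at h'
  exact List.replicate_append_cons_inj_left (by norm_num) h'

lemma append_patternSuffix_mem_Tset {c m : ℕ} {pre : List ℤ} :
    pre ++ patternSuffix m ∈ Tset c ↔ 2 * m + 4 ≤ c ∧ pre ∈ tuples (c - 4 - 2 * m) := by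
  have hsuf : ∀ b ∈ patternSuffix m, 2 ≤ b := by
    intro b hb
    simp only [patternSuffix, List.cons_append, List.nil_append, List.mem_cons, List.mem_append,
      List.mem_replicate, List.not_mem_nil, or_false] at hb
    omega
  simp only [Tset, Set.mem_ofPred_eq, mem_tuples, List.mem_append, List.sum_append,
    List.length_append]
  have hsum : (patternSuffix m).sum = 3 * m + 6 := by
    simp only [patternSuffix, List.cons_append, List.nil_append, List.sum_cons, List.sum_append,
      List.sum_replicate, Int.nsmul_eq_mul, List.sum_nil, add_zero]
    ring
  have hlen : (patternSuffix m).length = m + 3 := by simp [patternSuffix]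
  rw [hsum, hlen]
  have hne : pre ++ patternSuffix m ≠ [] := by simp [patternSuffix]
  have hall : (∀ b, b ∈ pre ∨ b ∈ patternSuffix m → 2 ≤ b) ↔ ∀ b ∈ pre, 2 ≤ b :=
    ⟨fun h b hb => h b (Or.inl hb), fun h b => Or.rec (h b) (hsuf b)⟩
  simp only [hne, hall, ne_eq, not_false_eq_true, true_and]
  constructor
  · rintro ⟨hpre, hc⟩
    have := List.card_nsmul_le_sum pre 2 hpre
    rw [nsmul_eq_mul] at this
    push_cast at hc
    exact ⟨by omega, hpre, by omega⟩
  · rintro ⟨hc, hpre, hsum⟩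
    exact ⟨hpre, by push_cast; omega⟩

lemma M_eq_sum (c : ℕ) :
    M c = ∑ k ∈ range ((c - 4) / 2),
      numOddPrefixes (patternSuffix (k + 1)) (c - 4 - 2 * (k + 1)) := by
  have hpat : ∀ (pre : List ℤ) m, pre ++ [2] ++ List.replicate m 3 ++ [2, 2] =
      pre ++ patternSuffix m := by simp [patternSuffix]
  have hset : {l : List ℤ | l ∈ Tset c ∧ Odd (cont l) ∧
      ∃ m : ℕ, 1 ≤ m ∧ ∃ pre : List ℤ, l = pre ++ [2] ++ List.replicate m 3 ++ [2, 2]} =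
      ↑((range ((c - 4) / 2)).biUnion fun k =>
        {pre ∈ tuples (c - 4 - 2 * (k + 1)) | Odd (cont (pre ++ patternSuffix (k + 1)))}.image
          (· ++ patternSuffix (k + 1))) := by
    ext l
    simp only [hpat, Set.mem_ofPred_eq, coe_biUnion, coe_image, coe_filter, coe_range,
      Set.mem_iUnion, Set.mem_image, Set.mem_Iio]
    constructor
    · rintro ⟨hT, hodd, m, hm, pre, rfl⟩
      obtain ⟨k, rfl⟩ : ∃ k, m = k + 1 := ⟨m - 1, by omega⟩
      obtain ⟨hc, hpre⟩ := append_patternSuffix_mem_Tset.mp hT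
      exact ⟨k, by omega, pre, ⟨hpre, hodd⟩, rfl⟩
    · rintro ⟨k, hk, pre, ⟨hpre, hodd⟩, rfl⟩
      exact ⟨append_patternSuffix_mem_Tset.mpr ⟨by omega, hpre⟩, hodd, k + 1, by omega, pre, rfl⟩
  rw [M, hset, Nat.card_coe_set_eq, Set.ncard_coe_finset, card_biUnion]
  · exact sum_congr rfl fun k _ => card_image_of_injective _ (List.append_left_injective _)
  · intro k _ k' _ hkk'
    simp only [Function.onFun, disjoint_left, mem_image]
    rintro _ ⟨pre, -, rfl⟩ ⟨pre', -, h⟩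
    exact hkk' (by simpa using eq_of_append_patternSuffix_eq h.symm)

lemma three_mul_jac (n : ℕ) : 3 * jac n = 2 ^ n - (-1) ^ n :=
  Int.mul_ediv_cancel' (by simpa using sub_dvd_pow_sub_pow (2 : ℤ) (-1) n)

lemma jac_add_two (n : ℕ) : jac (n + 2) = jac n + 2 ^ n := by
  have h₁ := three_mul_jac n
  have h₂ := three_mul_jac (n + 2)
  rw [pow_add, pow_add] at h₂
  norm_num at h₂
  linarith

lemma sum_range_two_pow_sub_two_mul : ∀ d : ℕ,
    ∑ k ∈ range (d / 2), (2 : ℤ) ^ (d - 2 - 2 * k) = jac d - d % 2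
  | 0 => by decide
  | 1 => by decide
  | d + 2 => by
    have ih := sum_range_two_pow_sub_two_mul d
    have hexp : ∀ k, d - 2 * (k + 1) = d - 2 - 2 * k := by omega
    rw [show (d + 2) / 2 = d / 2 + 1 by omega, sum_range_succ', jac_add_two]
    simp only [Nat.add_sub_cancel, hexp, mul_zero, Nat.sub_zero]
    omega

lemma sum_range_ite_sub_two_mul_eq_zero (d : ℕ) :
    ∑ k ∈ range (d / 2), (if d - 2 - 2 * k = 0 ∧ (k + 1) % 3 = 1 then (1 : ℤ) else 0) =
      if d % 2 = 0 ∧ d / 2 % 3 = 1 then 1 else 0 := by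
  rw [sum_boole]
  have : {k ∈ range (d / 2) | d - 2 - 2 * k = 0 ∧ (k + 1) % 3 = 1} =
      if d % 2 = 0 ∧ d / 2 % 3 = 1 then {d / 2 - 1} else ∅ := by
    ext k
    simp only [mem_filter, mem_range]
    split_ifs <;> simp only [mem_singleton, notMem_empty, iff_false, not_and] <;> omega
  rw [this]
  split_ifs <;> simp

lemma M_add_six (d : ℕ) :
    (M (d + 6) : ℤ) = M (d + 4) + (jac d - d % 2) - (if d % 2 = 0 ∧ d / 2 % 3 = 1 then 1 else 0) +
      numOddPrefixes (patternSuffix (d / 2 + 1)) (d % 2) := by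
  have hterm : ∀ k ∈ range (d / 2),
      (numOddPrefixes (patternSuffix (k + 1)) (d + 2 - 2 * (k + 1)) : ℤ) =
        numOddPrefixes (patternSuffix (k + 1)) (d - 2 * (k + 1)) +
          (2 ^ (d - 2 - 2 * k) - if d - 2 - 2 * k = 0 ∧ (k + 1) % 3 = 1 then 1 else 0) := by
    intro k hk
    rw [mem_range] at hk
    rw [show d + 2 - 2 * (k + 1) = d - 2 - 2 * k + 2 by omega,
      show d - 2 * (k + 1) = d - 2 - 2 * k by omega,
      numOddPrefixes_patternSuffix_add_two, add_sub_assoc]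
  rw [M_eq_sum, M_eq_sum, show (d + 6 - 4) / 2 = d / 2 + 1 by omega,
    show (d + 4 - 4) / 2 = d / 2 by omega, sum_range_succ,
    show d + 6 - 4 - 2 * (d / 2 + 1) = d % 2 by omega]
  push_cast
  rw [sum_congr rfl hterm, sum_add_distrib, sum_sub_distrib, sum_range_two_pow_sub_two_mul,
    sum_range_ite_sub_two_mul_eq_zero]
  ring

theorem M_recursion :
    M 4 = 0 ∧ M 5 = 0 ∧
      ∀ c : ℕ, 6 ≤ c →
        (M c : ℤ) = M (c - 2) + jac (c - 6) + (-1 : ℤ) ^ c * (if 3 ∣ c then 1 else 0) := by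
  refine ⟨by simp [M_eq_sum], by simp [M_eq_sum], fun c hc => ?_⟩
  obtain ⟨d, rfl⟩ : ∃ d, c = d + 6 := ⟨c - 6, by omega⟩
  rw [M_add_six, Nat.add_sub_cancel, show d + 6 - 2 = d + 4 by omega]
  rcases Nat.even_or_odd d with hd | hd
  · have h2 := Nat.even_iff.mp hd
    rw [h2, (hd.add (by decide : Even 6)).neg_one_pow, numOddPrefixes_zero]
    simp only [odd_cont_patternSuffix, true_and]
    split_ifs <;> omega
  · have h2 := Nat.odd_iff.mp hd
    rw [h2, (hd.add_even (by decide : Even 6)).neg_one_pow,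
      numOddPrefixes_one (by simp [patternSuffix])]
    simp only [odd_cont_tail_patternSuffix, one_ne_zero, false_and, if_false]
    split_ifs <;> omega
end
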